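/- Under the hypotheses of the discrete maximum principle (0 < φⁿ, φⁿ⁺¹ < 1 pointwise), the solution of the stabilized scheme satisfies the discrete energy dissipation inequality E_h(φⁿ⁺¹) − E_h(φⁿ) ≤ −(1/τ)‖φⁿ⁺¹ − φⁿ‖², where E_h(φ) = ⟨F(φ),1⟩ + (ε²/2)‖∇_h φ‖² and F is the logarithmic Flory–Huggins potential. -/

import Mathlib

/-!
Pairing the scheme with `φⁿ⁺¹ - φⁿ` and summing by parts turns `ε² ⟨Δₕ φⁿ⁺¹, φⁿ⁺¹ - φⁿ⟩` into
`-ε² ⟨∇ₕ φⁿ⁺¹, ∇ₕ (φⁿ⁺¹ - φⁿ)⟩`, which dominates the change of `ε²/2 ‖∇ₕ φ‖²` because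
`a² - b² ≤ 2a (a - b)`. What is left, `⟨f(φⁿ, φⁿ⁺¹), φⁿ⁺¹ - φⁿ⟩`, bounds the change of `⟨F(φ), 1⟩`
by the pointwise inequality `F(a) - F(b) ≤ f(b, a) (a - b)`. The latter follows from the tangent
bound `x log x - y log y ≤ (log y + x / y) (x - y)` at `x = a, 1 - a`, from
`(a / b - (1 - a) / (1 - b)) (a - b) = (a - b)² / (b (1 - b)) ≥ 0` for the stabilisation term, and
from the exact identity `θ (a - a²) - θ (b - b²) = θ (1 - a - b) (a - b)` for the concave part.
-/

noncomputable def gradX {N M : ℕ} (h : ℝ) (φ : Fin N × Fin M → ℝ)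
    (p : Fin (N + 1) × Fin M) : ℝ :=
  if hp : 0 < p.1.val ∧ p.1.val < N then
    (φ (⟨p.1.val, hp.2⟩, p.2) - φ (⟨p.1.val - 1, by omega⟩, p.2)) / h
  else 0

noncomputable def gradY {N M : ℕ} (h : ℝ) (φ : Fin N × Fin M → ℝ)
    (p : Fin N × Fin (M + 1)) : ℝ :=
  if hp : 0 < p.2.val ∧ p.2.val < M then
    (φ (p.1, ⟨p.2.val, hp.2⟩) - φ (p.1, ⟨p.2.val - 1, by omega⟩)) / h
  else 0

/-- Cell-centered five-point discrete Laplacian with homogeneous Neumann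
boundary conditions (boundary fluxes vanish). -/
noncomputable def discLap {N M : ℕ} (h : ℝ) (φ : Fin N × Fin M → ℝ)
    (p : Fin N × Fin M) : ℝ :=
  (gradX h φ (p.1.succ, p.2) - gradX h φ (p.1.castSucc, p.2)) / h
    + (gradY h φ (p.1, p.2.succ) - gradY h φ (p.1, p.2.castSucc)) / h

/-- Discrete L² inner product. -/
noncomputable def discInner {N M : ℕ} (h : ℝ) (φ ψ : Fin N × Fin M → ℝ) : ℝ :=
  h ^ 2 * ∑ p : Fin N × Fin M, φ p * ψ p

/-- Discrete H¹ seminorm squared: ‖∇ₕφ‖². -/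
noncomputable def discGradNormSq {N M : ℕ} (h : ℝ) (φ : Fin N × Fin M → ℝ) : ℝ :=
  h ^ 2 * ((∑ p : Fin (N + 1) × Fin M, gradX h φ p ^ 2)
    + ∑ p : Fin N × Fin (M + 1), gradY h φ p ^ 2)

noncomputable def FH (θ φ : ℝ) : ℝ :=
  φ * Real.log φ + (1 - φ) * Real.log (1 - φ) + θ * (φ - φ ^ 2)

noncomputable def fchem (lam θ b a : ℝ) : ℝ :=
  Real.log b - Real.log (1 - b) + (lam + 1) * (a / b - (1 - a) / (1 - b)) + θ * (1 - a - b)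

/-- Discrete total free energy. -/
noncomputable def discEnergy {N M : ℕ} (h ε θ : ℝ) (φ : Fin N × Fin M → ℝ) : ℝ :=
  discInner h (fun p => FH θ (φ p)) (fun _ => 1) + ε ^ 2 / 2 * discGradNormSq h φ


/-- Differences across the `n + 1` faces of a one-dimensional cell-centred grid, with zero flux
through the two boundary faces. `gradX h φ (i, j)` and `gradY h φ (i, j)` are, definitionally,
`faceGrad` of the row `fun k => φ (k, j)` and of the column `fun k => φ (i, k)`. -/
noncomputable def faceGrad {n : ℕ} (h : ℝ) (v : Fin n → ℝ) (i : Fin (n + 1)) : ℝ :=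
  if hi : 0 < i.val ∧ i.val < n then (v ⟨i.val, hi.2⟩ - v ⟨i.val - 1, by omega⟩) / h else 0

section faceGrad

variable {n : ℕ} (h : ℝ)

@[simp] theorem faceGrad_zero (v : Fin n → ℝ) : faceGrad h v 0 = 0 := by
  simp [faceGrad]

@[simp] theorem faceGrad_last (v : Fin n → ℝ) : faceGrad h v (Fin.last n) = 0 := by
  simp [faceGrad]

theorem faceGrad_succ_castSucc (v : Fin (n + 1) → ℝ) (i : Fin n) :
    faceGrad h v i.castSucc.succ = (v i.succ - v i.castSucc) / h := by
  rw [faceGrad, dif_pos ⟨by simp, by simp⟩]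
  rfl

theorem faceGrad_sub (u v : Fin n → ℝ) (i : Fin (n + 1)) :
    faceGrad h (u - v) i = faceGrad h u i - faceGrad h v i := by
  unfold faceGrad
  split_ifs
  · simp only [Pi.sub_apply]; ring
  · ring

theorem sum_sub_div_mul_eq_neg_sum_mul_faceGrad (G : Fin (n + 1) → ℝ) (hG₀ : G 0 = 0)
    (hGₙ : G (Fin.last n) = 0) (v : Fin n → ℝ) :
    ∑ i : Fin n, (G i.succ - G i.castSucc) / h * v i = -∑ i, G i * faceGrad h v i := by
  cases n with
  | zero => simp [hG₀]
  | succ m =>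
    have hR : ∑ i, G i * faceGrad h v i
        = ∑ i : Fin m, G i.castSucc.succ * ((v i.succ - v i.castSucc) / h) := by
      rw [Fin.sum_univ_succ, Fin.sum_univ_castSucc]
      simp [hG₀, hGₙ, faceGrad_succ_castSucc]
    have hL : ∑ i, (G i.succ - G i.castSucc) / h * v i
        = ∑ i : Fin m, G i.castSucc.succ * ((v i.castSucc - v i.succ) / h) := by
      simp only [sub_div, sub_mul, Finset.sum_sub_distrib]
      rw [Fin.sum_univ_castSucc (fun i => G i.succ / h * v i),
        Fin.sum_univ_succ (fun i => G i.castSucc / h * v i)]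
      simp only [Fin.succ_last, hGₙ, hG₀, Fin.castSucc_zero, Fin.castSucc_succ, zero_div,
        zero_mul, add_zero, zero_add, ← Finset.sum_sub_distrib]
      exact Finset.sum_congr rfl fun i _ => by ring
    rw [hL, hR, ← Finset.sum_neg_distrib]
    exact Finset.sum_congr rfl fun i _ => by ring

end faceGrad

noncomputable def discGradInner {N M : ℕ} (h : ℝ) (φ ψ : Fin N × Fin M → ℝ) : ℝ :=
  h ^ 2 * ((∑ p : Fin (N + 1) × Fin M, gradX h φ p * gradX h ψ p)
    + ∑ p : Fin N × Fin (M + 1), gradY h φ p * gradY h ψ p)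

section Grid

variable {N M : ℕ} (h : ℝ)

theorem discInner_discLap (φ ψ : Fin N × Fin M → ℝ) :
    discInner h (discLap h φ) ψ = -discGradInner h φ ψ := by
  have hx : ∑ p : Fin N × Fin M,
      (gradX h φ (p.1.succ, p.2) - gradX h φ (p.1.castSucc, p.2)) / h * ψ p
        = -∑ p, gradX h φ p * gradX h ψ p := by
    rw [Fintype.sum_prod_type_right, Fintype.sum_prod_type_right, ← Finset.sum_neg_distrib]
    exact Finset.sum_congr rfl fun j _ => sum_sub_div_mul_eq_neg_sum_mul_faceGrad h
      (faceGrad h fun k => φ (k, j)) (faceGrad_zero h _) (faceGrad_last h _) _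
  have hy : ∑ p : Fin N × Fin M,
      (gradY h φ (p.1, p.2.succ) - gradY h φ (p.1, p.2.castSucc)) / h * ψ p
        = -∑ p, gradY h φ p * gradY h ψ p := by
    rw [Fintype.sum_prod_type, Fintype.sum_prod_type, ← Finset.sum_neg_distrib]
    exact Finset.sum_congr rfl fun i _ => sum_sub_div_mul_eq_neg_sum_mul_faceGrad h
      (faceGrad h fun k => φ (i, k)) (faceGrad_zero h _) (faceGrad_last h _) _
  simp only [discInner, discGradInner, discLap, add_mul, Finset.sum_add_distrib, hx, hy]
  ring

theorem gradX_sub (φ ψ : Fin N × Fin M → ℝ) (p : Fin (N + 1) × Fin M) :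
    gradX h (φ - ψ) p = gradX h φ p - gradX h ψ p :=
  faceGrad_sub h (fun i => φ (i, p.2)) (fun i => ψ (i, p.2)) p.1

theorem gradY_sub (φ ψ : Fin N × Fin M → ℝ) (p : Fin N × Fin (M + 1)) :
    gradY h (φ - ψ) p = gradY h φ p - gradY h ψ p :=
  faceGrad_sub h (fun j => φ (p.1, j)) (fun j => ψ (p.1, j)) p.2

theorem discGradNormSq_sub_le (φ ψ : Fin N × Fin M → ℝ) :
    discGradNormSq h φ - discGradNormSq h ψ ≤ 2 * discGradInner h φ (φ - ψ) := by
  have key (a b : ℝ) : a ^ 2 - b ^ 2 ≤ 2 * (a * (a - b)) := by nlinarith [sq_nonneg (a - b)]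
  have hx : ∑ p, gradX h φ p ^ 2 - ∑ p, gradX h ψ p ^ 2
      ≤ 2 * ∑ p, gradX h φ p * gradX h (φ - ψ) p := by
    rw [← Finset.sum_sub_distrib, Finset.mul_sum]
    exact Finset.sum_le_sum fun p _ => gradX_sub h φ ψ p ▸ key _ _
  have hy : ∑ p, gradY h φ p ^ 2 - ∑ p, gradY h ψ p ^ 2
      ≤ 2 * ∑ p, gradY h φ p * gradY h (φ - ψ) p := by
    rw [← Finset.sum_sub_distrib, Finset.mul_sum]
    exact Finset.sum_le_sum fun p _ => gradY_sub h φ ψ p ▸ key _ _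
  have := mul_le_mul_of_nonneg_left (add_le_add hx hy) (sq_nonneg h)
  simp only [discGradNormSq, discGradInner]
  linarith

end Grid

open Real in
theorem mul_log_sub_mul_log_le {x y : ℝ} (hx : 0 < x) (hy : 0 < y) :
    x * log x - y * log y ≤ (log y + x / y) * (x - y) := by
  have hlog : log x - log y ≤ x / y - 1 := by
    rw [← log_div hx.ne' hy.ne']
    exact log_le_sub_one_of_pos (div_pos hx hy)
  calc x * log x - y * log y = x * (log x - log y) + (x - y) * log y := by ring
    _ ≤ x * (x / y - 1) + (x - y) * log y := by gcongr
    _ = (log y + x / y) * (x - y) := by field_simp; ring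

theorem FH_sub_le_fchem_mul {lam θ a b : ℝ} (hlam : 0 ≤ lam) (ha : a ∈ Set.Ioo (0 : ℝ) 1)
    (hb : b ∈ Set.Ioo (0 : ℝ) 1) : FH θ a - FH θ b ≤ fchem lam θ b a * (a - b) := by
  obtain ⟨ha₀, ha₁⟩ := ha
  obtain ⟨hb₀, hb₁⟩ := hb
  have hent := mul_log_sub_mul_log_le ha₀ hb₀
  have hent' := mul_log_sub_mul_log_le (sub_pos.2 ha₁) (sub_pos.2 hb₁)
  have hstab : 0 ≤ (a / b - (1 - a) / (1 - b)) * (a - b) := by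
    have hsq : (a / b - (1 - a) / (1 - b)) * (a - b) = (a - b) ^ 2 / (b * (1 - b)) := by
      field_simp [(sub_pos.2 hb₁).ne']
      ring
    rw [hsq]
    exact div_nonneg (sq_nonneg _) (mul_pos hb₀ (sub_pos.2 hb₁)).le
  have := mul_nonneg hlam hstab
  rw [FH, FH, fchem]
  linarith

theorem discInner_FH_sub_le {N M : ℕ} (h θ lam : ℝ) (hlam : 0 ≤ lam)
    (φ ψ : Fin N × Fin M → ℝ) (hφ : ∀ p, φ p ∈ Set.Ioo (0 : ℝ) 1)
    (hψ : ∀ p, ψ p ∈ Set.Ioo (0 : ℝ) 1) :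
    discInner h (fun p => FH θ (φ p)) (fun _ => 1) - discInner h (fun p => FH θ (ψ p)) (fun _ => 1)
      ≤ discInner h (fun p => fchem lam θ (ψ p) (φ p)) (φ - ψ) := by
  simp only [discInner, mul_one, ← mul_sub, ← Finset.sum_sub_distrib]
  gcongr with p
  exact FH_sub_le_fchem_mul hlam (hφ p) (hψ p)

theorem discrete_energy_dissipation_general {N M : ℕ} (h τ ε lam θ : ℝ)
    (hlam : 0 ≤ lam)
    (φ0 φ1 : Fin N × Fin M → ℝ)
    (h0 : ∀ p, φ0 p ∈ Set.Ioo (0:ℝ) 1) (h1 : ∀ p, φ1 p ∈ Set.Ioo (0:ℝ) 1)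
    (hscheme : ∀ p, (φ1 p - φ0 p) / τ - ε ^ 2 * discLap h φ1 p
      + fchem lam θ (φ0 p) (φ1 p) = 0) :
    discEnergy h ε θ φ1 - discEnergy h ε θ φ0 ≤
      -(1 / τ) * discInner h (fun p => φ1 p - φ0 p) (fun p => φ1 p - φ0 p) := by
  have hpot := discInner_FH_sub_le h θ lam hlam φ1 φ0 h1 h0
  have hgrad := mul_le_mul_of_nonneg_left (discGradNormSq_sub_le h φ1 φ0)
    (by positivity : 0 ≤ ε ^ 2 / 2)
  have hpair : ε ^ 2 * discInner h (discLap h φ1) (φ1 - φ0)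
      = 1 / τ * discInner h (φ1 - φ0) (φ1 - φ0)
        + discInner h (fun p => fchem lam θ (φ0 p) (φ1 p)) (φ1 - φ0) := by
    simp only [discInner, Pi.sub_apply, Finset.mul_sum, ← Finset.sum_add_distrib]
    exact Finset.sum_congr rfl fun p _ => by
      linear_combination (-(h ^ 2) * (φ1 p - φ0 p)) * hscheme p
  rw [discInner_discLap] at hpair
  rw [discEnergy, discEnergy]
  change _ ≤ -(1 / τ) * discInner h (φ1 - φ0) (φ1 - φ0)
  linarith

theorem discrete_energy_dissipation {N M : ℕ} (h τ ε lam θ : ℝ)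
    (hh : 0 < h) (hτ : 0 < τ) (hε : 0 < ε) (hlam : 0 ≤ lam)
    (φ0 φ1 : Fin N × Fin M → ℝ)
    (h0 : ∀ p, φ0 p ∈ Set.Ioo (0:ℝ) 1) (h1 : ∀ p, φ1 p ∈ Set.Ioo (0:ℝ) 1)
    (hscheme : ∀ p, (φ1 p - φ0 p) / τ - ε ^ 2 * discLap h φ1 p
      + fchem lam θ (φ0 p) (φ1 p) = 0) :
    discEnergy h ε θ φ1 - discEnergy h ε θ φ0 ≤
      -(1 / τ) * discInner h (fun p => φ1 p - φ0 p) (fun p => φ1 p - φ0 p) :=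
  discrete_energy_dissipation_general h τ ε lam θ hlam φ0 φ1 h0 h1 hscheme
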